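/- Suppose ρ(A) < 1, and for each user i let p_i = (I_N − A)^{-1} b_i and q_i = C (I_N − A)^{-1} b_i + d_i. Then every entry of p_i and every entry of q_i lies in the interval [0, 1]; in particular, the solutions of the linear system are valid probabilities. -/

import Mathlib

/-!
Write `M` for `A` and `x = (1 - M)⁻¹ b`. The matrix `M` is entrywise nonnegative and each row
sum of `M` plus the corresponding entry of `b` is at most `1`. If the row sums were strictly below
`1`, the Neumann series would make `(1 - M)⁻¹` entrywise nonnegative, and then `x ≥ 0` and
`1 - x = (1 - M)⁻¹ ((1 - M) 𝟙 - b) ≥ 0`. In general one applies this to `t • M` for `t < 1` and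
lets `t → 1`: since `ρ(M) < 1`, `1` is not an eigenvalue, so `1 - M` is invertible and the
inverses converge. The bound for `q` follows since `(C p + d)_j = c p_j + d_j` with `c, d ≥ 0` and
`c + d ≤ 1`.
-/

open Matrix Finset Filter
open scoped Topology

/-- Spectral radius of a real square matrix: the maximum of `|z|` over the
complex eigenvalues `z` (roots of the characteristic polynomial over `ℂ`). -/
noncomputable def specRad (N : ℕ) (T : Matrix (Fin N) (Fin N) ℝ) : ℝ :=
  sSup {r : ℝ | ∃ z : ℂ, ((T.map Complex.ofReal).charpoly).IsRoot z ∧ r = ‖z‖}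

/-- The propagation matrix `A`. -/
noncomputable def propA (N : ℕ) (L : Fin N → Finset (Fin N)) (lam mu : Fin N → ℝ) :
    Matrix (Fin N) (Fin N) ℝ :=
  Matrix.of fun j k => if k ∈ L j then mu k / (∑ l ∈ L j, (lam l + mu l)) else 0

/-- The vector `b_i`. -/
noncomputable def bvec (N : ℕ) (L : Fin N → Finset (Fin N)) (lam mu : Fin N → ℝ)
    (i : Fin N) : Fin N → ℝ :=
  fun j => if i ∈ L j then lam i / (∑ l ∈ L j, (lam l + mu l)) else 0

/-- The diagonal matrix `C`. -/
noncomputable def Cmat (N : ℕ) (lam mu : Fin N → ℝ) : Matrix (Fin N) (Fin N) ℝ :=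
  Matrix.diagonal fun j => mu j / (lam j + mu j)

/-- The vector `d_i`. -/
noncomputable def dvec (N : ℕ) (lam mu : Fin N → ℝ) (i : Fin N) : Fin N → ℝ :=
  fun j => if j = i then lam i / (lam i + mu i) else 0

lemma norm_le_specRad {N : ℕ} {T : Matrix (Fin N) (Fin N) ℝ} {z : ℂ}
    (hz : ((T.map Complex.ofReal).charpoly).IsRoot z) : ‖z‖ ≤ specRad N T := by
  have hfin : {z | ((T.map Complex.ofReal).charpoly).IsRoot z}.Finite :=
    Polynomial.finite_setOfPred_isRoot (charpoly_monic _).ne_zero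
  refine le_csSup ((hfin.image (‖·‖)).bddAbove.mono ?_) ⟨z, hz, rfl⟩
  rintro r ⟨w, hw, rfl⟩
  exact ⟨w, hw, rfl⟩

lemma det_one_sub_ne_zero_of_specRad_lt_one {N : ℕ} {T : Matrix (Fin N) (Fin N) ℝ}
    (h : specRad N T < 1) : (1 - T).det ≠ 0 := by
  intro hdet
  have hroot : ((T.map Complex.ofReal).charpoly).IsRoot 1 := by
    rw [show (T.map Complex.ofReal).charpoly = T.charpoly.map Complex.ofRealHom from
      charpoly_map T Complex.ofRealHom, Polynomial.IsRoot, Polynomial.eval_one_map, eval_charpoly,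
      map_one, hdet, map_zero]
  have := norm_le_specRad hroot
  rw [norm_one] at this
  linarith

section Substochastic

variable {n : Type*} [Fintype n] {M : Matrix n n ℝ}

lemma mulVec_nonneg (hM : ∀ i j, 0 ≤ M i j) {x : n → ℝ} (hx : 0 ≤ x) : 0 ≤ M *ᵥ x :=
  fun i => Finset.sum_nonneg fun j _ => mul_nonneg (hM i j) (hx j)

variable [DecidableEq n]

section LinftyNorm

attribute [local instance] Matrix.linftyOpNormedAddCommGroup Matrix.linftyOpNormedRing
  Matrix.linftyOpNormedSpace

lemma linfty_norm_lt_one_of_mulVec_one_lt_one (hM : ∀ i j, 0 ≤ M i j)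
    (hs : ∀ i, (M *ᵥ 1) i < 1) : ‖M‖ < 1 := by
  rw [linfty_opNorm_def, NNReal.coe_lt_one, Finset.sup_lt_iff zero_lt_one]
  intro i _
  rw [← NNReal.coe_lt_one, NNReal.coe_sum]
  simpa [mulVec, dotProduct, Real.norm_of_nonneg (hM i _)] using hs i

lemma inv_one_sub_apply_nonneg_of_linfty_norm_lt_one (hM : ∀ i j, 0 ≤ M i j) (hnorm : ‖M‖ < 1)
    (i j : n) : 0 ≤ (1 - M)⁻¹ i j := by
  have : CompleteSpace (Matrix n n ℝ) := FiniteDimensional.complete ℝ _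
  have hsum : Summable (M ^ ·) := summable_geometric_of_norm_lt_one hnorm
  have hinv : (1 - M)⁻¹ = ∑' k : ℕ, M ^ k := by
    rw [nonsing_inv_eq_ringInverse, ← geom_series_eq_inverse M hnorm]
    rfl
  have hentry : (∑' k : ℕ, M ^ k) i j = ∑' k : ℕ, (M ^ k) i j :=
    (LinearMap.toContinuousLinearMap (entryLinearMap ℝ ℝ i j)).map_tsum hsum
  rw [hinv, hentry]
  exact tsum_nonneg fun k => pow_apply_nonneg hM k i j

lemma isUnit_det_one_sub_of_linfty_norm_lt_one (hnorm : ‖M‖ < 1) : IsUnit (1 - M).det :=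
  (isUnit_iff_isUnit_det _).mp (isUnit_one_sub_of_norm_lt_one hnorm)

lemma mulVec_inv_one_sub_mem_Icc_of_mulVec_one_lt_one (hM : ∀ i j, 0 ≤ M i j) {b : n → ℝ}
    (hb : 0 ≤ b) (hrow : M *ᵥ 1 + b ≤ 1) (hs : ∀ i, (M *ᵥ 1) i < 1) :
    (1 - M)⁻¹ *ᵥ b ∈ Set.Icc 0 1 := by
  have hnorm := linfty_norm_lt_one_of_mulVec_one_lt_one hM hs
  have hinv := inv_one_sub_apply_nonneg_of_linfty_norm_lt_one hM hnorm
  have hsub : 1 - (1 - M)⁻¹ *ᵥ b = (1 - M)⁻¹ *ᵥ (1 - (M *ᵥ 1 + b)) := calc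
    1 - (1 - M)⁻¹ *ᵥ b = (1 - M)⁻¹ *ᵥ ((1 - M) *ᵥ 1) - (1 - M)⁻¹ *ᵥ b := by
      rw [mulVec_mulVec, nonsing_inv_mul _ (isUnit_det_one_sub_of_linfty_norm_lt_one hnorm),
        one_mulVec]
    _ = (1 - M)⁻¹ *ᵥ (1 - (M *ᵥ 1 + b)) := by rw [← mulVec_sub, sub_mulVec, one_mulVec, sub_sub]
  refine ⟨mulVec_nonneg hinv hb, sub_nonneg.mp ?_⟩
  rw [hsub]
  exact mulVec_nonneg hinv (sub_nonneg.mpr hrow)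

end LinftyNorm

lemma continuousAt_inv_one_sub_smul (hdet : (1 - M).det ≠ 0) :
    ContinuousAt (fun t : ℝ => (1 - t • M)⁻¹) 1 := by
  have hinv : ContinuousAt Inv.inv (1 - M) := by
    refine continuousAt_matrix_inv _ ?_
    rw [Ring.inverse_eq_inv']
    exact continuousAt_inv₀ hdet
  have hlin : Continuous fun t : ℝ => (1 : Matrix n n ℝ) - t • M := by fun_prop
  exact hinv.comp_of_eq hlin.continuousAt (by rw [one_smul])

lemma mulVec_inv_one_sub_mem_Icc (hM : ∀ i j, 0 ≤ M i j) {b : n → ℝ} (hb : 0 ≤ b)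
    (hrow : M *ᵥ 1 + b ≤ 1) (hdet : (1 - M).det ≠ 0) :
    (1 - M)⁻¹ *ᵥ b ∈ Set.Icc 0 1 := by
  have hlim : Tendsto (fun t : ℝ => (1 - t • M)⁻¹ *ᵥ b) (𝓝[<] 1) (𝓝 ((1 - M)⁻¹ *ᵥ b)) := by
    have hmul : Continuous fun A : Matrix n n ℝ => A *ᵥ b :=
      continuous_id.matrix_mulVec continuous_const
    simpa only [Function.comp_def, one_smul] using
      (hmul.continuousAt.comp (continuousAt_inv_one_sub_smul hdet)).tendsto.mono_left
        nhdsWithin_le_nhds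
  refine isClosed_Icc.mem_of_tendsto hlim ?_
  filter_upwards [Ioo_mem_nhdsLT zero_lt_one] with t ⟨ht0, ht1⟩
  refine mulVec_inv_one_sub_mem_Icc_of_mulVec_one_lt_one (M := t • M)
    (fun i j => mul_nonneg ht0.le (hM i j)) hb (fun i => ?_) (fun i => ?_)
  all_goals
    have hrow_i := hrow i
    have hsum_nonneg := mulVec_nonneg hM zero_le_one i
    have hb_i := hb i
    simp only [smul_mulVec, Pi.add_apply, Pi.smul_apply, Pi.one_apply, Pi.zero_apply,
      smul_eq_mul] at hrow_i hsum_nonneg hb_i ⊢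
    nlinarith

end Substochastic

section Model

variable {N : ℕ} {L : Fin N → Finset (Fin N)} {lam mu : Fin N → ℝ}

lemma propA_nonneg (hlam : ∀ n, 0 ≤ lam n) (hmu : ∀ n, 0 ≤ mu n) (j k : Fin N) :
    0 ≤ propA N L lam mu j k := by
  rw [propA, of_apply]
  split_ifs
  · exact div_nonneg (hmu k) (sum_nonneg fun l _ => add_nonneg (hlam l) (hmu l))
  · exact le_rfl

lemma bvec_nonneg (hlam : ∀ n, 0 ≤ lam n) (hmu : ∀ n, 0 ≤ mu n) (i : Fin N) :
    0 ≤ bvec N L lam mu i := by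
  intro j
  unfold bvec
  split_ifs
  · exact div_nonneg (hlam i) (sum_nonneg fun l _ => add_nonneg (hlam l) (hmu l))
  · exact le_rfl

lemma propA_mulVec_one_add_bvec_le_one (hlam : ∀ n, 0 ≤ lam n) (hmu : ∀ n, 0 ≤ mu n)
    (i : Fin N) : propA N L lam mu *ᵥ 1 + bvec N L lam mu i ≤ 1 := by
  intro j
  have hrow : (propA N L lam mu *ᵥ 1) j = (∑ k ∈ L j, mu k) / ∑ l ∈ L j, (lam l + mu l) := by
    simp [propA, mulVec, dotProduct, sum_div]
  have hb : bvec N L lam mu i j =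
      (if i ∈ L j then lam i else 0) / ∑ l ∈ L j, (lam l + mu l) := by
    unfold bvec
    split_ifs <;> simp
  have hlam_le : (if i ∈ L j then lam i else 0) ≤ ∑ l ∈ L j, lam l := by
    split_ifs with hi
    · exact single_le_sum (fun l _ => hlam l) hi
    · exact sum_nonneg fun l _ => hlam l
  rw [Pi.add_apply, hrow, hb, ← add_div, Pi.one_apply]
  refine div_le_one_of_le₀ ?_ (sum_nonneg fun l _ => add_nonneg (hlam l) (hmu l))
  rw [sum_add_distrib]
  linarith

lemma Cmat_mulVec_add_dvec_mem_Icc (hlam : ∀ n, 0 ≤ lam n) (hmu : ∀ n, 0 ≤ mu n)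
    {p : Fin N → ℝ} (hp : p ∈ Set.Icc 0 1) (i j : Fin N) :
    (Cmat N lam mu *ᵥ p + dvec N lam mu i) j ∈ Set.Icc 0 1 := by
  set c := mu j / (lam j + mu j)
  have hc : 0 ≤ c := div_nonneg (hmu j) (add_nonneg (hlam j) (hmu j))
  have hd : 0 ≤ dvec N lam mu i j := by
    unfold dvec
    split_ifs
    · exact div_nonneg (hlam i) (add_nonneg (hlam i) (hmu i))
    · exact le_rfl
  have hcd : c + dvec N lam mu i j ≤ 1 := by
    have hsum : c + lam j / (lam j + mu j) ≤ 1 := by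
      rw [← add_div, add_comm]
      exact div_le_one_of_le₀ le_rfl (add_nonneg (hlam j) (hmu j))
    unfold dvec
    split_ifs with hji
    · rwa [← hji]
    · linarith [div_nonneg (hlam j) (add_nonneg (hlam j) (hmu j))]
  have hcp : c * p j ≤ c := mul_le_of_le_one_right hc (hp.2 j)
  rw [Pi.add_apply, Cmat, mulVec_diagonal]
  exact ⟨add_nonneg (mul_nonneg hc (hp.1 j)) hd, by linarith⟩

end Model

theorem stmt12_general (N : ℕ) (L : Fin N → Finset (Fin N))
    (lam mu : Fin N → ℝ)
    (hlam : ∀ n, 0 ≤ lam n) (hmu : ∀ n, 0 ≤ mu n)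
    (hrho : specRad N (propA N L lam mu) < 1) :
    ∀ i j : Fin N,
      (1 - propA N L lam mu)⁻¹.mulVec (bvec N L lam mu i) j ∈ Set.Icc (0 : ℝ) 1 ∧
      ((Cmat N lam mu).mulVec
          ((1 - propA N L lam mu)⁻¹.mulVec (bvec N L lam mu i)) +
        dvec N lam mu i) j ∈ Set.Icc (0 : ℝ) 1 := by
  intro i j
  have hp := mulVec_inv_one_sub_mem_Icc (propA_nonneg hlam hmu) (bvec_nonneg hlam hmu i)
    (propA_mulVec_one_add_bvec_le_one hlam hmu i) (det_one_sub_ne_zero_of_specRad_lt_one hrho)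
  exact ⟨⟨hp.1 j, hp.2 j⟩, Cmat_mulVec_add_dvec_mem_Icc hlam hmu hp i j⟩

/-- if `ρ(A) < 1`, every entry of `p_i = (I - A)⁻¹ b_i` and of
`q_i = C (I - A)⁻¹ b_i + d_i` lies in `[0, 1]`. -/
theorem stmt12 (N : ℕ) (hN : 1 ≤ N) (L : Fin N → Finset (Fin N))
    (hL : ∀ j, (L j).Nonempty) (lam mu : Fin N → ℝ)
    (hlam : ∀ n, 0 ≤ lam n) (hmu : ∀ n, 0 ≤ mu n)
    (hpos : ∀ n, 0 < lam n + mu n)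
    (hrho : specRad N (propA N L lam mu) < 1) :
    ∀ i j : Fin N,
      (1 - propA N L lam mu)⁻¹.mulVec (bvec N L lam mu i) j ∈ Set.Icc (0 : ℝ) 1 ∧
      ((Cmat N lam mu).mulVec
          ((1 - propA N L lam mu)⁻¹.mulVec (bvec N L lam mu i)) +
        dvec N lam mu i) j ∈ Set.Icc (0 : ℝ) 1 :=
  stmt12_general N L lam mu hlam hmu hrho
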